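/- arXiv:2307.03105 — 2 statements merged into one kernel-verified Lean document; each statement's English description precedes it below -/
import Mathlib

section
/- Let $h \sim \mathcal{CN}(0,1)$ and, conditioned on $h$, let $n' \sim \mathcal{CN}(0, N/|h|^2)$ for some $N > 0$. Fix $\delta \in (0,1)$ and suppose $\sqrt{1+\delta} > 1$. Then $\Pr(|n'| + 1 \geq \sqrt{1+\delta}) + \Pr(|1 - |n'|| \leq \sqrt{1-\delta})$ equals $\left(1+\tfrac{(\sqrt{1+\delta}-1)^2}{N}\right)^{-1} + \left(1+\tfrac{(1-\sqrt{1-\delta})^2}{N}\right)^{-1} - \left(1+\tfrac{(\sqrt{1-\delta}+1)^2}{N}\right)^{-1}$, where probabilities are taken over both $n'$ and $h$. -/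
/-!
Conditionally on `h`, `n'` has law `CN(0, N/|h|²)`, and `CN(0, v)` has density
`(π v)⁻¹ exp(-|z|²/v)` on `ℂ`; in polar coordinates this gives the Rayleigh tail
`Pr(|n'| ≥ a | h) = exp(-a² |h|² / N)`. Averaging over `h` is a Gaussian integral,
`E exp(-k |h|²) = (1 + k)⁻¹`. The event `|1 - |n'|| ≤ √(1-δ)` is the annulus
`1 - √(1-δ) ≤ |n'| ≤ 1 + √(1-δ)`, whose probability is a difference of two tails.
-/

open MeasureTheory ProbabilityTheory Real

/-- The circularly-symmetric complex Gaussian measure `CN(0, v)` on `ℂ`. -/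
noncomputable def complexGaussian (v : ℝ) : Measure ℂ :=
  ((gaussianReal 0 (v / 2).toNNReal).prod (gaussianReal 0 (v / 2).toNNReal)).map
    Complex.measurableEquivRealProd.symm

/-- Joint law of `(h, n')` where `h ~ CN(0,1)` and, conditionally on `h`,
`n' ~ CN(0, N/|h|²)`. -/
noncomputable def fadedNoisePair (N : ℝ) : Measure (ℂ × ℂ) :=
  (complexGaussian 1).bind
    (fun h => (complexGaussian (N / ‖h‖ ^ 2)).map (fun n => (h, n)))

open Set Filter Topology
open scoped ENNReal

instance (v : ℝ) : IsProbabilityMeasure (complexGaussian v) :=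
  Measure.isProbabilityMeasure_map (MeasurableEquiv.measurable _).aemeasurable

noncomputable def complexGaussianPDFReal (v : ℝ) (z : ℂ) : ℝ :=
  (π * v)⁻¹ * exp (-‖z‖ ^ 2 / v)

lemma measurable_complexGaussianPDFReal (v : ℝ) : Measurable (complexGaussianPDFReal v) := by
  unfold complexGaussianPDFReal; fun_prop

lemma gaussianPDFReal_mul_gaussianPDFReal {v : ℝ} (hv : 0 < v) (x y : ℝ) :
    gaussianPDFReal 0 (v / 2).toNNReal x * gaussianPDFReal 0 (v / 2).toNNReal y
      = complexGaussianPDFReal v ⟨x, y⟩ := by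
  have hv2 : ((v / 2).toNNReal : ℝ) = v / 2 := Real.coe_toNNReal _ (by positivity)
  have hsq : √(2 * π * (v / 2)) * √(2 * π * (v / 2)) = π * v := by
    rw [Real.mul_self_sqrt (by positivity)]; ring
  rw [complexGaussianPDFReal, gaussianPDFReal, gaussianPDFReal, hv2, Complex.sq_norm,
    Complex.normSq_mk, mul_mul_mul_comm, ← mul_inv, hsq, ← Real.exp_add]
  congr 2
  ring

lemma complexGaussian_eq_withDensity {v : ℝ} (hv : 0 < v) :
    complexGaussian v
      = volume.withDensity (fun z => ENNReal.ofReal (complexGaussianPDFReal v z)) := by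
  have hσ : (v / 2).toNNReal ≠ 0 := by simp [hv]
  have he := Complex.volume_preserving_equiv_real_prod.symm
  ext s hs
  rw [complexGaussian, gaussianReal_of_var_ne_zero _ hσ,
    prod_withDensity (measurable_gaussianPDF _ _) (measurable_gaussianPDF _ _),
    ← Measure.volume_eq_prod, Measure.map_apply (MeasurableEquiv.measurable _) hs,
    withDensity_apply _ (MeasurableEquiv.measurable _ hs), withDensity_apply _ hs,
    ← he.setLIntegral_comp_preimage hs (measurable_complexGaussianPDFReal v).ennreal_ofReal]
  refine setLIntegral_congr_fun (MeasurableEquiv.measurable _ hs) fun p _ => ?_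
  rw [gaussianPDF, gaussianPDF, ← ENNReal.ofReal_mul (gaussianPDFReal_nonneg _ _ _),
    gaussianPDFReal_mul_gaussianPDFReal hv]
  rfl

lemma integral_exp_neg_mul_sq_norm_complex {b : ℝ} (hb : 0 < b) :
    ∫ z : ℂ, exp (-b * ‖z‖ ^ 2) = π / b := by
  rw [GaussianFourier.integral_rexp_neg_mul_sq_norm hb, Complex.finrank_real_complex]
  norm_num

lemma integrable_exp_neg_mul_sq_norm_complex {b : ℝ} (hb : 0 < b) :
    Integrable (fun z : ℂ => exp (-b * ‖z‖ ^ 2)) :=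
  Integrable.of_integral_ne_zero (by rw [integral_exp_neg_mul_sq_norm_complex hb]; positivity)

lemma integrable_complexGaussianPDFReal {v : ℝ} (hv : 0 < v) :
    Integrable (complexGaussianPDFReal v) := by
  refine ((integrable_exp_neg_mul_sq_norm_complex (inv_pos.2 hv)).const_mul (π * v)⁻¹).congr
    (.of_forall fun z => ?_)
  simp only [complexGaussianPDFReal]
  ring_nf

lemma complexGaussian_norm_mem {v : ℝ} (hv : 0 < v) {A : Set ℝ} (hA : MeasurableSet A)
    (hA0 : A ⊆ Ioi 0) :
    complexGaussian v {z | ‖z‖ ∈ A}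
      = ENNReal.ofReal (∫ r in A, 2 * r / v * exp (-r ^ 2 / v)) := by
  have hS : MeasurableSet {z : ℂ | ‖z‖ ∈ A} := measurable_norm hA
  rw [complexGaussian_eq_withDensity hv, withDensity_apply _ hS,
    ← ofReal_integral_eq_lintegral_ofReal (integrable_complexGaussianPDFReal hv).integrableOn
      (.of_forall fun z => by unfold complexGaussianPDFReal; positivity),
    ← integral_indicator hS]
  set g : ℝ → ℝ := fun r => (π * v)⁻¹ * exp (-r ^ 2 / v)
  have hind : {z : ℂ | ‖z‖ ∈ A}.indicator (complexGaussianPDFReal v)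
      = fun z => A.indicator g ‖z‖ := by
    ext z; by_cases hz : ‖z‖ ∈ A <;> simp [hz, g, complexGaussianPDFReal]
  have hmul : (fun r => r * A.indicator g r) = A.indicator (fun r => r * g r) :=
    funext fun r => (indicator_mul_right A id g).symm
  have hball : volume.real (Metric.ball (0 : ℂ) 1) = π := by simp [measureReal_def]
  rw [hind, integral_fun_norm_addHaar, Complex.finrank_real_complex, hball]
  simp only [nsmul_eq_mul, smul_eq_mul, Nat.add_one_sub_one, pow_one]
  rw [hmul, setIntegral_indicator hA, inter_eq_right.2 hA0, ← integral_const_mul,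
    ← integral_const_mul]
  congr 1
  refine setIntegral_congr_fun hA fun r _ => ?_
  simp only [g, Nat.cast_ofNat]
  field_simp

lemma integral_Ioi_mul_exp_neg_sq_div {v : ℝ} (hv : 0 < v) (a : ℝ) :
    ∫ r in Ioi a, 2 * r / v * exp (-r ^ 2 / v) = exp (-a ^ 2 / v) := by
  have hderiv (r : ℝ) :
      HasDerivAt (fun r => -exp (-r ^ 2 / v)) (2 * r / v * exp (-r ^ 2 / v)) r := by
    refine (((hasDerivAt_pow 2 r).fun_neg.div_const v).exp).fun_neg.congr_deriv ?_
    push_cast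
    ring
  have hint : Integrable (fun r : ℝ => 2 * r / v * exp (-r ^ 2 / v)) := by
    refine ((integrable_mul_exp_neg_mul_sq (inv_pos.2 hv)).const_mul (2 / v)).congr
      (.of_forall fun r => ?_)
    dsimp only
    field_simp
  have hlim : Tendsto (fun r : ℝ => -exp (-r ^ 2 / v)) atTop (𝓝 (-0)) := by
    refine (tendsto_exp_atBot.comp ?_).neg
    exact (tendsto_neg_atTop_atBot.comp (tendsto_pow_atTop two_ne_zero)).atBot_div_const hv
  rw [integral_Ioi_of_hasDerivAt_of_tendsto' (fun r _ => hderiv r) hint.integrableOn hlim]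
  ring

lemma complexGaussian_norm_gt {v a : ℝ} (hv : 0 < v) (ha : 0 ≤ a) :
    complexGaussian v {z | a < ‖z‖} = ENNReal.ofReal (exp (-a ^ 2 / v)) := by
  rw [← integral_Ioi_mul_exp_neg_sq_div hv a]
  exact complexGaussian_norm_mem hv measurableSet_Ioi (Ioi_subset_Ioi ha)

lemma complexGaussian_norm_ge {v a : ℝ} (hv : 0 < v) (ha : 0 < a) :
    complexGaussian v {z | a ≤ ‖z‖} = ENNReal.ofReal (exp (-a ^ 2 / v)) := by
  rw [← integral_Ioi_mul_exp_neg_sq_div hv a, ← integral_Ici_eq_integral_Ioi]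
  exact complexGaussian_norm_mem hv measurableSet_Ici (Ici_subset_Ioi.2 ha)

lemma lintegral_exp_neg_mul_sq_norm_complexGaussian {v k : ℝ} (hv : 0 < v) (hk : 0 ≤ k) :
    ∫⁻ z, ENNReal.ofReal (exp (-(k * ‖z‖ ^ 2))) ∂complexGaussian v
      = ENNReal.ofReal ((1 + k * v)⁻¹) := by
  have hb : 0 < v⁻¹ + k := by positivity
  have hprod (z : ℂ) :
      ENNReal.ofReal (complexGaussianPDFReal v z) * ENNReal.ofReal (exp (-(k * ‖z‖ ^ 2)))
      = ENNReal.ofReal ((π * v)⁻¹ * exp (-(v⁻¹ + k) * ‖z‖ ^ 2)) := by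
    rw [← ENNReal.ofReal_mul (by unfold complexGaussianPDFReal; positivity),
      complexGaussianPDFReal, mul_assoc, ← exp_add]
    ring_nf
  rw [complexGaussian_eq_withDensity hv, lintegral_withDensity_eq_lintegral_mul _
    (measurable_complexGaussianPDFReal v).ennreal_ofReal (by fun_prop)]
  simp only [Pi.mul_apply, hprod]
  rw [← ofReal_integral_eq_lintegral_ofReal
      ((integrable_exp_neg_mul_sq_norm_complex hb).const_mul _) (.of_forall fun z => by positivity),
    integral_const_mul, integral_exp_neg_mul_sq_norm_complex hb]
  congr 1
  field_simp

lemma ae_ne_zero_complexGaussian {v : ℝ} (hv : 0 < v) :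
    ∀ᵐ z ∂complexGaussian v, z ≠ 0 := by
  rw [complexGaussian_eq_withDensity hv]
  exact (withDensity_absolutelyContinuous _ _).ae_le (compl_mem_ae_iff.2 (measure_singleton 0))

lemma complexGaussian_eq_map_const_mul (v : ℝ) :
    complexGaussian v = (complexGaussian 1).map (fun z => (√v : ℂ) * z) := by
  have hreal : gaussianReal 0 (v / 2).toNNReal
      = (gaussianReal 0 (1 / 2 : ℝ).toNNReal).map (fun x => √v * x) := by
    rw [gaussianReal_map_const_mul, mul_zero]
    congr
    ext
    simp [Real.sq_sqrt', max_mul_of_nonneg, div_eq_mul_inv]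
  have hcomm : Complex.measurableEquivRealProd.symm ∘ Prod.map (√v * ·) (√v * ·)
      = (fun z => (√v : ℂ) * z) ∘ Complex.measurableEquivRealProd.symm := by
    ext p; simp [Complex.ext_iff]
  rw [complexGaussian, complexGaussian, hreal,
    Measure.map_prod_map _ _ (measurable_const_mul _) (measurable_const_mul _),
    Measure.map_map (MeasurableEquiv.measurable _) (by fun_prop), hcomm,
    Measure.map_map (by fun_prop) (MeasurableEquiv.measurable _)]

lemma measurable_complexGaussian_map_prodMk (N : ℝ) :
    Measurable fun h : ℂ => (complexGaussian (N / ‖h‖ ^ 2)).map (fun n => (h, n)) := by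
  -- `n' = √(N/|h|²) z` with `z ~ CN(0,1)` turns the kernel into pushforwards of one fixed measure
  set scale : ℂ × ℂ → ℂ × ℂ := fun p => (p.1, (√(N / ‖p.1‖ ^ 2) : ℂ) * p.2)
  have hscale : Measurable scale := by fun_prop
  have hkernel (h : ℂ) : (complexGaussian (N / ‖h‖ ^ 2)).map (fun n => (h, n))
      = (complexGaussian 1).map (scale ∘ Prod.mk h) := by
    rw [complexGaussian_eq_map_const_mul,
      Measure.map_map measurable_prodMk_left (measurable_const_mul _)]
    rfl
  simp_rw [hkernel]
  refine Measure.measurable_of_measurable_coe _ fun s hs => ?_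
  simp_rw [Measure.map_apply (hscale.comp measurable_prodMk_left) hs, preimage_comp]
  exact measurable_measure_prodMk_left (hscale hs)

lemma fadedNoisePair_apply (N : ℝ) {S : Set (ℂ × ℂ)} (hS : MeasurableSet S) :
    fadedNoisePair N S
      = ∫⁻ h, complexGaussian (N / ‖h‖ ^ 2) (Prod.mk h ⁻¹' S) ∂complexGaussian 1 := by
  rw [fadedNoisePair, Measure.bind_apply hS (measurable_complexGaussian_map_prodMk N).aemeasurable]
  simp_rw [Measure.map_apply measurable_prodMk_left hS]

instance (N : ℝ) : IsProbabilityMeasure (fadedNoisePair N) :=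
  isProbabilityMeasure_bind (measurable_complexGaussian_map_prodMk N).aemeasurable
    (.of_forall fun _ => Measure.isProbabilityMeasure_map measurable_prodMk_left.aemeasurable)

lemma fadedNoisePair_snd_preimage_of_tail {N a : ℝ} (hN : 0 < N) {B : Set ℂ}
    (hB : MeasurableSet B)
    (htail : ∀ v, 0 < v → complexGaussian v B = ENNReal.ofReal (exp (-a ^ 2 / v))) :
    fadedNoisePair N (Prod.snd ⁻¹' B) = ENNReal.ofReal ((1 + a ^ 2 / N)⁻¹) := by
  have hcond : ∀ᵐ h ∂complexGaussian 1, complexGaussian (N / ‖h‖ ^ 2) B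
      = ENNReal.ofReal (exp (-(a ^ 2 / N * ‖h‖ ^ 2))) := by
    filter_upwards [ae_ne_zero_complexGaussian one_pos] with h hh
    rw [htail _ (by positivity)]
    congr 2
    field_simp
  rw [fadedNoisePair_apply N (measurable_snd hB)]
  refine (lintegral_congr_ae hcond).trans ?_
  rw [lintegral_exp_neg_mul_sq_norm_complexGaussian one_pos (by positivity), mul_one]

lemma fadedNoisePair_real_norm_snd_ge {N a : ℝ} (hN : 0 < N) (ha : 0 < a) :
    (fadedNoisePair N).real {p | a ≤ ‖p.2‖} = (1 + a ^ 2 / N)⁻¹ := by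
  have h : fadedNoisePair N {p | a ≤ ‖p.2‖} = ENNReal.ofReal ((1 + a ^ 2 / N)⁻¹) :=
    fadedNoisePair_snd_preimage_of_tail hN (measurableSet_le measurable_const measurable_norm)
      fun v hv => complexGaussian_norm_ge hv ha
  rw [measureReal_def, h, ENNReal.toReal_ofReal (by positivity)]

lemma fadedNoisePair_real_norm_snd_gt {N a : ℝ} (hN : 0 < N) (ha : 0 ≤ a) :
    (fadedNoisePair N).real {p | a < ‖p.2‖} = (1 + a ^ 2 / N)⁻¹ := by
  have h : fadedNoisePair N {p | a < ‖p.2‖} = ENNReal.ofReal ((1 + a ^ 2 / N)⁻¹) :=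
    fadedNoisePair_snd_preimage_of_tail hN (measurableSet_lt measurable_const measurable_norm)
      fun v hv => complexGaussian_norm_gt hv ha
  rw [measureReal_def, h, ENNReal.toReal_ofReal (by positivity)]

lemma fadedNoisePair_real_abs_one_sub_norm_snd_le {N s : ℝ} (hN : 0 < N) (hs0 : 0 ≤ s)
    (hs1 : s < 1) :
    (fadedNoisePair N).real {p | |1 - ‖p.2‖| ≤ s}
      = (1 + (1 - s) ^ 2 / N)⁻¹ - (1 + (s + 1) ^ 2 / N)⁻¹ := by
  have hannulus : {p : ℂ × ℂ | |1 - ‖p.2‖| ≤ s}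
      = {p | 1 - s ≤ ‖p.2‖} \ {p | s + 1 < ‖p.2‖} := by
    ext p
    simp only [mem_ofPred_eq, abs_le, Set.mem_sdiff, not_lt]
    constructor <;> intro h <;> constructor <;> linarith [h.1, h.2]
  have hsub : {p : ℂ × ℂ | s + 1 < ‖p.2‖} ⊆ {p | 1 - s ≤ ‖p.2‖} :=
    fun p (hp : s + 1 < ‖p.2‖) => show 1 - s ≤ ‖p.2‖ by linarith
  rw [hannulus, measureReal_sdiff hsub (measurableSet_lt measurable_const (by fun_prop)),
    fadedNoisePair_real_norm_snd_ge hN (by linarith),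
    fadedNoisePair_real_norm_snd_gt hN (by linarith)]

/-- Proposition 3: the upper bound on the average false-alarm probability of
the instantaneous-energy detector.  With `h ~ CN(0,1)` and conditionally
`n' ~ CN(0, N/|h|²)`,
`Pr(|n'| + 1 ≥ √(1+δ)) + Pr(|1 - |n'|| ≤ √(1-δ))
  = (1+(√(1+δ)-1)²/N)⁻¹ + (1+(1-√(1-δ))²/N)⁻¹ - (1+(√(1-δ)+1)²/N)⁻¹`. -/
theorem average_false_alarm_bound
    (N δ : ℝ) (hN : 0 < N) (hδ : δ ∈ Set.Ioo (0 : ℝ) 1)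
    (hs : 1 < Real.sqrt (1 + δ)) :
    (fadedNoisePair N {p | Real.sqrt (1 + δ) ≤ ‖p.2‖ + 1}).toReal
      + (fadedNoisePair N {p | |1 - ‖p.2‖| ≤ Real.sqrt (1 - δ)}).toReal
    = (1 + (Real.sqrt (1 + δ) - 1) ^ 2 / N)⁻¹
      + (1 + (1 - Real.sqrt (1 - δ)) ^ 2 / N)⁻¹
      - (1 + (Real.sqrt (1 - δ) + 1) ^ 2 / N)⁻¹ := by
  have hshift : {p : ℂ × ℂ | √(1 + δ) ≤ ‖p.2‖ + 1} = {p | √(1 + δ) - 1 ≤ ‖p.2‖} := by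
    simp_rw [sub_le_iff_le_add]
  rw [← measureReal_def, ← measureReal_def, hshift,
    fadedNoisePair_real_norm_snd_ge hN (by linarith),
    fadedNoisePair_real_abs_one_sub_norm_snd_le hN (Real.sqrt_nonneg _)
      ((Real.sqrt_lt' one_pos).2 (by linarith [hδ.1]))]
  ring
end

section
/- Let $N > 0$ and define $f(\delta) = \left(1+\tfrac{(\sqrt{1+\delta}-1)^2}{N}\right)^{-1} + \left(1+\tfrac{(1-\sqrt{1-\delta})^2}{N}\right)^{-1} - \left(1+\tfrac{(\sqrt{1-\delta}+1)^2}{N}\right)^{-1}$ for $\delta \in (0,1)$. Then $f$ is strictly decreasing in $\delta$ on $(0,1)$, $\lim_{\delta \to 0^+} f(\delta) = 2 - \left(1 + \tfrac{4}{N}\right)^{-1}$, and $f(\delta) \to \left(1+\tfrac{(\sqrt{2}-1)^2}{N}\right)^{-1} + \left(1+\tfrac{1}{N}\right)^{-1} - \left(1+\tfrac{1}{N}\right)^{-1} = \left(1+\tfrac{(\sqrt{2}-1)^2}{N}\right)^{-1}$ as $\delta \to 1^-$. In particular, for every target $\epsilon$ with $\left(1+\tfrac{(\sqrt{2}-1)^2}{N}\right)^{-1}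 < \epsilon < \lim_{\delta\to 0^+} f(\delta)$, there exists a unique $\delta \in (0,1)$ with $f(\delta) = \epsilon$. -/
open Real Filter Set

/-- Properties of the upper bound `f(δ) = P^avg_UF` on the average false-alarm
probability: `f` is strictly decreasing on `(0,1)`; `f(δ) → 2 - (1+4/N)⁻¹` as
`δ → 0⁺`; `f(δ) → (1+(√2-1)²/N)⁻¹` as `δ → 1⁻`; and for every target
`ε` strictly between these two limits there is a unique `δ ∈ (0,1)` with
`f(δ) = ε`. -/
theorem false_alarm_bound_monotone_and_range
    (N : ℝ) (hN : 0 < N)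
    (f : ℝ → ℝ)
    (hf : ∀ δ, f δ = (1 + (Real.sqrt (1 + δ) - 1) ^ 2 / N)⁻¹
        + (1 + (1 - Real.sqrt (1 - δ)) ^ 2 / N)⁻¹
        - (1 + (Real.sqrt (1 - δ) + 1) ^ 2 / N)⁻¹) :
    StrictAntiOn f (Ioo (0 : ℝ) 1)
    ∧ Tendsto f (nhdsWithin 0 (Ioi 0)) (nhds (2 - (1 + 4 / N)⁻¹))
    ∧ Tendsto f (nhdsWithin 1 (Iio 1)) (nhds ((1 + (Real.sqrt 2 - 1) ^ 2 / N)⁻¹))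
    ∧ ∀ ε : ℝ, (1 + (Real.sqrt 2 - 1) ^ 2 / N)⁻¹ < ε → ε < 2 - (1 + 4 / N)⁻¹ →
        ∃! δ, δ ∈ Ioo (0 : ℝ) 1 ∧ f δ = ε := by
  -- key monotonicity fact
  have key : ∀ p q : ℝ, 0 ≤ p → p < q → (1 + q / N)⁻¹ < (1 + p / N)⁻¹ := by
    intro p q hp hpq
    have h1 : (0:ℝ) < 1 + p / N := by positivity
    have h2 : 1 + p / N < 1 + q / N := by gcongr
    exact inv_strictAnti₀ h1 h2
  have hanti : StrictAntiOn f (Ioo (0 : ℝ) 1) := by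
    intro a ha b hb hab
    obtain ⟨ha0, ha1⟩ := ha
    obtain ⟨hb0, hb1⟩ := hb
    rw [hf, hf]
    -- term 1
    have s1a : (1:ℝ) ≤ Real.sqrt (1 + a) := by
      nlinarith [Real.sq_sqrt (by linarith : (0:ℝ) ≤ 1 + a), Real.sqrt_nonneg (1 + a)]
    have s1 : Real.sqrt (1 + a) < Real.sqrt (1 + b) :=
      Real.sqrt_lt_sqrt (by linarith) (by linarith)
    have t1 : (1 + (Real.sqrt (1 + b) - 1) ^ 2 / N)⁻¹
        < (1 + (Real.sqrt (1 + a) - 1) ^ 2 / N)⁻¹ := by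
      apply key
      · positivity
      · apply pow_lt_pow_left₀ (by linarith) (by linarith) (by norm_num)
    -- term 2
    have s2a : Real.sqrt (1 - a) ≤ 1 := Real.sqrt_le_one.mpr (by linarith)
    have s2 : Real.sqrt (1 - b) < Real.sqrt (1 - a) :=
      Real.sqrt_lt_sqrt (by linarith) (by linarith)
    have t2 : (1 + (1 - Real.sqrt (1 - b)) ^ 2 / N)⁻¹
        < (1 + (1 - Real.sqrt (1 - a)) ^ 2 / N)⁻¹ := by
      apply key
      · positivity
      · apply pow_lt_pow_left₀ (by linarith) (by linarith) (by norm_num)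
    -- term 3
    have s3b : (0:ℝ) ≤ Real.sqrt (1 - b) := Real.sqrt_nonneg _
    have t3 : (1 + (Real.sqrt (1 - a) + 1) ^ 2 / N)⁻¹
        < (1 + (Real.sqrt (1 - b) + 1) ^ 2 / N)⁻¹ := by
      apply key
      · positivity
      · apply pow_lt_pow_left₀ (by linarith) (by linarith) (by norm_num)
    linarith
  -- continuity of f
  have hfe : f = fun δ => (1 + (Real.sqrt (1 + δ) - 1) ^ 2 / N)⁻¹
        + (1 + (1 - Real.sqrt (1 - δ)) ^ 2 / N)⁻¹
        - (1 + (Real.sqrt (1 - δ) + 1) ^ 2 / N)⁻¹ := funext hf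
  have hc : Continuous f := by
    rw [hfe]
    have c1 : Continuous fun δ : ℝ => (1 + (Real.sqrt (1 + δ) - 1) ^ 2 / N)⁻¹ :=
      Continuous.inv₀ (by fun_prop) (fun x => by positivity)
    have c2 : Continuous fun δ : ℝ => (1 + (1 - Real.sqrt (1 - δ)) ^ 2 / N)⁻¹ :=
      Continuous.inv₀ (by fun_prop) (fun x => by positivity)
    have c3 : Continuous fun δ : ℝ => (1 + (Real.sqrt (1 - δ) + 1) ^ 2 / N)⁻¹ :=
      Continuous.inv₀ (by fun_prop) (fun x => by positivity)
    exact (c1.add c2).sub c3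
  have hf0 : f 0 = 2 - (1 + 4 / N)⁻¹ := by
    rw [hf]
    norm_num
  have hf1 : f 1 = (1 + (Real.sqrt 2 - 1) ^ 2 / N)⁻¹ := by
    rw [hf]
    norm_num
  have h0 : Tendsto f (nhdsWithin 0 (Ioi 0)) (nhds (2 - (1 + 4 / N)⁻¹)) := by
    rw [← hf0]
    exact (hc.tendsto 0).mono_left nhdsWithin_le_nhds
  have h1 : Tendsto f (nhdsWithin 1 (Iio 1)) (nhds ((1 + (Real.sqrt 2 - 1) ^ 2 / N)⁻¹)) := by
    rw [← hf1]
    exact (hc.tendsto 1).mono_left nhdsWithin_le_nhds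
  refine ⟨hanti, h0, h1, ?_⟩
  intro ε hε1 hε2
  -- find a near 0 with f a > ε and a ∈ Ioo 0 1
  have hIoo0 : Ioo (0:ℝ) 1 ∈ nhdsWithin 0 (Ioi 0) := by
    rw [show Ioo (0:ℝ) 1 = Ioi 0 ∩ Iio 1 by rfl]
    exact inter_mem_nhdsWithin _ (Iio_mem_nhds one_pos)
  have hIoo1 : Ioo (0:ℝ) 1 ∈ nhdsWithin 1 (Iio 1) := by
    rw [show Ioo (0:ℝ) 1 = Ioi 0 ∩ Iio 1 by rfl]
    rw [inter_comm]
    exact inter_mem_nhdsWithin _ (Ioi_mem_nhds one_pos)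
  have hea : ∀ᶠ x in nhdsWithin 0 (Ioi 0), ε < f x ∧ x ∈ Ioo (0:ℝ) 1 :=
    (h0.eventually (eventually_gt_nhds hε2)).and hIoo0
  have heb : ∀ᶠ x in nhdsWithin 1 (Iio 1), f x < ε ∧ x ∈ Ioo (0:ℝ) 1 :=
    (h1.eventually (eventually_lt_nhds hε1)).and hIoo1
  obtain ⟨a, hfa, haI⟩ := hea.exists
  obtain ⟨b, hfb, hbI⟩ := heb.exists
  have hab : a < b := by
    rcases lt_trichotomy a b with h | h | h
    · exact h
    · exfalso; rw [h] at hfa; linarith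
    · exfalso; have := hanti hbI haI h; linarith
  have hsub : Icc a b ⊆ Ioo (0:ℝ) 1 := fun x hx =>
    ⟨lt_of_lt_of_le haI.1 hx.1, lt_of_le_of_lt hx.2 hbI.2⟩
  have hIVT := intermediate_value_Icc' hab.le (hc.continuousOn (s := Icc a b))
  obtain ⟨δ, hδI, hδε⟩ := hIVT ⟨hfb.le, hfa.le⟩
  refine ⟨δ, ⟨hsub hδI, hδε⟩, ?_⟩
  rintro y ⟨hyI, hyε⟩
  exact hanti.injOn hyI (hsub hδI) (by rw [hyε, hδε])
end
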